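/- arXiv:1109.6253 — 4 statements merged into one kernel-verified Lean document; each statement's English description precedes it below -/
import Mathlib

section
/- Define the multiplicative function ð_k by ð_k(p^a) = 2 if a = 1 and ð_k(p^a) = (a+1)^k if a ≠ 1, for each prime p and a ≥ 1. Then for any positive integers a, b and k ≥ 2, τ(a)·τ(b) ≤ ð_2(a·b), where τ is the number-of-divisors function. -/
open Nat Finset

/-- The multiplicative function `ð_k`, determined on prime powers by
`ð_k(p) = 2` and `ð_k(p^a) = (a+1)^k` for `a ≠ 1`. -/
def eth (k : ℕ) (n : ℕ) : ℕ :=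
  ∏ p ∈ n.primeFactors, (if n.factorization p = 1 then 2 else (n.factorization p + 1) ^ k)

/-! Comparing exponents prime by prime: at `p` the left side contributes `(α + 1) (β + 1)` and
`ð_k(ab)` contributes `(α + β + 1)^k`, except when `α + β = 1`, where one exponent vanishes and
both sides equal `2`. -/

theorem Nat.card_divisors_eq_prod_of_primeFactors_subset {n : ℕ} (hn : n ≠ 0) {s : Finset ℕ}
    (hs : n.primeFactors ⊆ s) : #n.divisors = ∏ p ∈ s, (n.factorization p + 1) := by
  rw [Nat.card_divisors hn]
  refine prod_subset hs fun p _ hp => ?_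
  rw [Finsupp.notMem_support_iff.mp (by rwa [Nat.support_factorization]), zero_add]

theorem add_one_mul_add_one_le_pow {x y k : ℕ} (hk : 2 ≤ k) :
    (x + 1) * (y + 1) ≤ (x + y + 1) ^ k :=
  calc (x + 1) * (y + 1) ≤ (x + y + 1) ^ 2 := by nlinarith
    _ ≤ (x + y + 1) ^ k := Nat.pow_le_pow_right (by omega) hk

theorem add_one_mul_add_one_le_ite {x y k : ℕ} (hk : 2 ≤ k) :
    (x + 1) * (y + 1) ≤ if x + y = 1 then 2 else (x + y + 1) ^ k := by
  split_ifs with h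
  · obtain ⟨rfl, rfl⟩ | ⟨rfl, rfl⟩ : x = 0 ∧ y = 1 ∨ x = 1 ∧ y = 0 := by omega
    all_goals norm_num
  · exact add_one_mul_add_one_le_pow hk

theorem card_divisors_mul_card_divisors_le_eth {a b k : ℕ} (ha : a ≠ 0) (hb : b ≠ 0)
    (hk : 2 ≤ k) : #a.divisors * #b.divisors ≤ eth k (a * b) := by
  have hab : a * b ≠ 0 := mul_ne_zero ha hb
  rw [card_divisors_eq_prod_of_primeFactors_subset ha
      (primeFactors_mono (dvd_mul_right a b) hab),
    card_divisors_eq_prod_of_primeFactors_subset hb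
      (primeFactors_mono (dvd_mul_left b a) hab),
    ← prod_mul_distrib, eth]
  refine prod_le_prod' fun p _ => ?_
  rw [Nat.factorization_mul ha hb, Finsupp.add_apply]
  exact add_one_mul_add_one_le_ite hk

theorem stmt_4 (a b : ℕ) (ha : 0 < a) (hb : 0 < b) :
    (Nat.divisors a).card * (Nat.divisors b).card ≤ eth 2 (a * b) :=
  card_divisors_mul_card_divisors_le_eth ha.ne' hb.ne' le_rfl
end

section
/- Let p be an odd prime and e1, e2, e3, e4 ≥ 0 integers. Let Γ = {(a,b) ∈ ℤ² : p^{e1} | a, p^{e2} | b, p^{e3} | (b+a), p^{e4} | (b-a)}. Then Γ is a sublattice of ℤ² of index p^{e_{σ(1)} + e_{σ(2)}}, where e_{σ(1)} ≥ e_{σ(2)} are the two largest among e1, e2, e3, e4. -/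
/-- The sublattice of `ℤ²` given by `d1 ∣ a`, `d2 ∣ b`, `d3 ∣ b + a`, `d4 ∣ b - a`. -/
def latSub (d1 d2 d3 d4 : ℤ) : AddSubgroup (ℤ × ℤ) where
  carrier := {x | d1 ∣ x.1 ∧ d2 ∣ x.2 ∧ d3 ∣ (x.2 + x.1) ∧ d4 ∣ (x.2 - x.1)}
  zero_mem' := by simp
  add_mem' := by
    rintro x y ⟨h1, h2, h3, h4⟩ ⟨g1, g2, g3, g4⟩
    refine ⟨dvd_add h1 g1, dvd_add h2 g2, ?_, ?_⟩
    · have : (x + y).2 + (x + y).1 = (x.2 + x.1) + (y.2 + y.1) := by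
        simp [Prod.fst_add, Prod.snd_add]; ring
      rw [this]; exact dvd_add h3 g3
    · have : (x + y).2 - (x + y).1 = (x.2 - x.1) + (y.2 - y.1) := by
        simp [Prod.fst_add, Prod.snd_add]; ring
      rw [this]; exact dvd_add h4 g4
  neg_mem' := by
    rintro x ⟨h1, h2, h3, h4⟩
    refine ⟨h1.neg_right, h2.neg_right, ?_, ?_⟩
    · have : (-x).2 + (-x).1 = -(x.2 + x.1) := by simp; ring
      rw [this]; exact h3.neg_right
    · have : (-x).2 - (-x).1 = -(x.2 - x.1) := by simp; ring
      rw [this]; exact h4.neg_right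


/-!
Each condition says that `p^{e_k}` divides the linear form `ℓ_k(x) = x·c_k` for
`c_k ∈ {(1,0), (0,1), (1,1), (-1,1)}`, and any two of these vectors have determinant
`±1` or `±2`, a unit modulo the odd prime `p`. By Cramer's rule `det(c_i, c_j) ℓ_k` is an
integral combination of `ℓ_i` and `ℓ_j`, so the two conditions with the largest exponents
imply the other two. Those two describe the kernel of `x ↦ (ℓ_i x mod p^{e_i}, ℓ_j x mod p^{e_j})`,
which is onto `ℤ/p^{e_i} × ℤ/p^{e_j}` because `(c_i, c_j)` is invertible modulo `p`.
-/

def linForm (c : ℤ × ℤ) : ℤ × ℤ →+ ℤ :=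
  AddMonoidHom.mk' (fun x => c.1 * x.1 + c.2 * x.2) fun x y => by
    simp only [Prod.fst_add, Prod.snd_add]; ring

lemma linForm_apply (c x : ℤ × ℤ) : linForm c x = c.1 * x.1 + c.2 * x.2 := rfl

def cross (u v : ℤ × ℤ) : ℤ := u.1 * v.2 - u.2 * v.1

lemma cross_mul_linForm (u v w x : ℤ × ℤ) :
    cross u v * linForm w x = cross w v * linForm u x + cross u w * linForm v x := by
  simp only [cross, linForm_apply]; ring

lemma dvd_linForm_of_isCoprime_cross {u v w x : ℤ × ℤ} {n : ℤ} (huv : IsCoprime (cross u v) n)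
    (hu : n ∣ linForm u x) (hv : n ∣ linForm v x) : n ∣ linForm w x :=
  huv.symm.dvd_of_dvd_mul_left <| by
    rw [cross_mul_linForm]; exact dvd_add (hu.mul_left _) (hv.mul_left _)

def reduceForms (u v : ℤ × ℤ) (m n : ℕ) : ℤ × ℤ →+ ZMod m × ZMod n :=
  ((Int.castAddHom (ZMod m)).comp (linForm u)).prod ((Int.castAddHom (ZMod n)).comp (linForm v))

lemma mem_ker_reduceForms {u v x : ℤ × ℤ} {m n : ℕ} :
    x ∈ (reduceForms u v m n).ker ↔ (m : ℤ) ∣ linForm u x ∧ (n : ℤ) ∣ linForm v x := by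
  simp [reduceForms, Prod.ext_iff, ZMod.intCast_zmod_eq_zero_iff_dvd]

lemma reduceForms_surjective {u v : ℤ × ℤ} {m n : ℕ} (h : IsCoprime (cross u v) (m * n)) :
    Function.Surjective (reduceForms u v m n) := by
  rintro ⟨s, t⟩
  obtain ⟨a, b, hab⟩ := h
  obtain ⟨S, rfl⟩ := ZMod.intCast_surjective s
  obtain ⟨T, rfl⟩ := ZMod.intCast_surjective t
  -- `a` inverts `cross u v` modulo `m * n`; the vector is the adjugate applied to `(S, T)`
  set x : ℤ × ℤ := a • (v.2 * S - u.2 * T, u.1 * T - v.1 * S)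
  have hu : linForm u x = S + m * (-(b * n * S)) := by
    simp only [x, linForm_apply, cross, Prod.smul_fst, Prod.smul_snd, smul_eq_mul] at hab ⊢
    linear_combination S * hab
  have hv : linForm v x = T + n * (-(b * m * T)) := by
    simp only [x, linForm_apply, cross, Prod.smul_fst, Prod.smul_snd, smul_eq_mul] at hab ⊢
    linear_combination T * hab
  refine ⟨x, ?_⟩
  simp [reduceForms, hu, hv]

lemma index_ker_reduceForms {u v : ℤ × ℤ} {m n : ℕ} (h : IsCoprime (cross u v) (m * n)) :
    (reduceForms u v m n).ker.index = m * n := by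
  rw [AddSubgroup.index_ker, AddMonoidHom.range_eq_top_of_surjective _ (reduceForms_surjective h),
    AddSubgroup.card_top, Nat.card_prod, Nat.card_zmod, Nat.card_zmod]

lemma forall_dvd_linForm_iff {ι : Type*} {ℓ : ι → ℤ × ℤ} {e : ι → ℕ} {p : ℤ} {i j : ι}
    {x : ℤ × ℤ} (hij : IsCoprime (cross (ℓ i) (ℓ j)) p) (hi : ∀ k, e k ≤ e i)
    (hj : ∀ k, k ≠ i → e k ≤ e j) :
    (∀ k, p ^ e k ∣ linForm (ℓ k) x) ↔ p ^ e i ∣ linForm (ℓ i) x ∧ p ^ e j ∣ linForm (ℓ j) x := by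
  refine ⟨fun h => ⟨h i, h j⟩, fun ⟨h_i, h_j⟩ k => ?_⟩
  rcases eq_or_ne k i with rfl | hk
  · exact h_i
  · exact dvd_linForm_of_isCoprime_cross (hij.pow_right (n := e k))
      ((pow_dvd_pow p ((hj k hk).trans (hi j))).trans h_i) ((pow_dvd_pow p (hj k hk)).trans h_j)

def squareForms : Fin 4 → ℤ × ℤ := ![(1, 0), (0, 1), (1, 1), (-1, 1)]

lemma mem_latSub_iff {d : Fin 4 → ℤ} {x : ℤ × ℤ} :
    x ∈ latSub (d 0) (d 1) (d 2) (d 3) ↔ ∀ k, d k ∣ linForm (squareForms k) x := by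
  simp [latSub, Fin.forall_fin_succ, squareForms, linForm_apply, add_comm, sub_eq_neg_add]

lemma cross_squareForms_dvd_two : ∀ i j, i ≠ j → cross (squareForms i) (squareForms j) ∣ 2 := by
  decide

theorem stmt_6 (p : ℕ) (hp : p.Prime) (hodd : p ≠ 2) (e : Fin 4 → ℕ)
    (σ : Equiv.Perm (Fin 4)) (hσ : ∀ i j : Fin 4, i ≤ j → e (σ j) ≤ e (σ i)) :
    (latSub ((p : ℤ) ^ e 0) ((p : ℤ) ^ e 1) ((p : ℤ) ^ e 2) ((p : ℤ) ^ e 3)).index =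
      p ^ (e (σ 0) + e (σ 1)) := by
  have h_max : ∀ k, e k ≤ e (σ 0) := fun k => by
    simpa using hσ 0 (σ.symm k) (Fin.zero_le _)
  have h_second : ∀ k, k ≠ σ 0 → e k ≤ e (σ 1) := fun k hk => by
    have : σ.symm k ≠ 0 := by rwa [Ne, Equiv.symm_apply_eq]
    simpa using hσ 1 (σ.symm k) (Fin.one_le_of_ne_zero this)
  have h_two : IsCoprime (2 : ℤ) p := mod_cast Nat.isCoprime_iff_coprime.2 ((Nat.coprime_primes Nat.prime_two hp).2 hodd.symm)
  have h_cross : IsCoprime (cross (squareForms (σ 0)) (squareForms (σ 1))) p :=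
    h_two.of_isCoprime_of_dvd_left
      (cross_squareForms_dvd_two _ _ (σ.injective.ne (by decide)))
  have h_ker : latSub ((p : ℤ) ^ e 0) ((p : ℤ) ^ e 1) ((p : ℤ) ^ e 2) ((p : ℤ) ^ e 3) =
      (reduceForms (squareForms (σ 0)) (squareForms (σ 1)) (p ^ e (σ 0)) (p ^ e (σ 1))).ker := by
    ext x
    rw [mem_latSub_iff (d := fun k => (p : ℤ) ^ e k), forall_dvd_linForm_iff h_cross h_max h_second,
      mem_ker_reduceForms]
    push_cast; rfl
  rw [h_ker, index_ker_reduceForms (by push_cast; exact h_cross.pow_right.mul_right h_cross.pow_right),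
    pow_add]
end

section
/- Let e3, e4 ≥ 1. Then the subgroup Γ = {(a,b) ∈ ℤ² : 2^{e3} | (b+a), 2^{e4} | (b-a)} of ℤ² has index 2^{e3 + e4 - 1}. -/
theorem stmt_7 (e3 e4 : ℕ) (h3 : 1 ≤ e3) (h4 : 1 ≤ e4) :
    (latSub 1 1 ((2 : ℤ) ^ e3) ((2 : ℤ) ^ e4)).index = 2 ^ (e3 + e4 - 1) := by
  have hd3 : (2:ℕ) ∣ 2^e3 := dvd_pow_self 2 (by omega)
  have hd4 : (2:ℕ) ∣ 2^e4 := dvd_pow_self 2 (by omega)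
  set f : ℤ × ℤ →+ ZMod (2^e3) × ZMod (2^e4) :=
    AddMonoidHom.mk' (fun x => (((x.2 + x.1 : ℤ) : ZMod (2^e3)), ((x.2 - x.1 : ℤ) : ZMod (2^e4))))
      (by intro a b; simp [Prod.ext_iff]; constructor <;> push_cast <;> ring) with hf
  set ψ : ZMod (2^e3) × ZMod (2^e4) →+ ZMod 2 :=
    AddMonoidHom.mk' (fun p => ZMod.castHom hd3 (ZMod 2) p.1 - ZMod.castHom hd4 (ZMod 2) p.2)
      (by intro a b; simp only [Prod.fst_add, Prod.snd_add, map_add]; ring) with hψ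
  -- latSub is the kernel of f
  have hker : latSub 1 1 ((2 : ℤ) ^ e3) ((2 : ℤ) ^ e4) = f.ker := by
    ext x
    simp only [latSub, AddSubgroup.mem_mk, Set.mem_setOf_eq, AddMonoidHom.mem_ker, hf,
      AddMonoidHom.mk'_apply, Prod.ext_iff, Prod.fst_zero, Prod.snd_zero,
      ZMod.intCast_zmod_eq_zero_iff_dvd]
    push_cast
    simp [one_dvd]
  -- range f = ker ψ
  have hrange : f.range = ψ.ker := by
    ext p
    constructor
    · rintro ⟨x, rfl⟩
      simp only [AddMonoidHom.mem_ker, hf, hψ, AddMonoidHom.mk'_apply, map_intCast]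
      rw [sub_eq_zero]
      have : ((x.2 + x.1 : ℤ) : ZMod 2) = ((x.2 - x.1 : ℤ) : ZMod 2) := by
        rw [ZMod.intCast_eq_intCast_iff]
        have : (x.2 + x.1) - (x.2 - x.1) = 2 * x.1 := by ring
        exact Int.ModEq.symm (Int.modEq_iff_dvd.mpr (by rw [this]; exact ⟨x.1, by push_cast; ring⟩))
      exact this
    · intro hp
      simp only [AddMonoidHom.mem_ker, hψ, AddMonoidHom.mk'_apply, sub_eq_zero] at hp
      set U : ℤ := (p.1.val : ℤ)
      set V : ℤ := (p.2.val : ℤ)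
      have hUV : (2:ℤ) ∣ U - V := by
        have h1 : ZMod.castHom hd3 (ZMod 2) p.1 = ((U : ℤ) : ZMod 2) := by
          have : p.1 = ((p.1.val : ℕ) : ZMod (2^e3)) := (ZMod.natCast_rightInverse p.1).symm
          rw [this]
          push_cast [map_natCast]
          simp [U]
        have h2 : ZMod.castHom hd4 (ZMod 2) p.2 = ((V : ℤ) : ZMod 2) := by
          have : p.2 = ((p.2.val : ℕ) : ZMod (2^e4)) := (ZMod.natCast_rightInverse p.2).symm
          rw [this]
          push_cast [map_natCast]
          simp [V]
        rw [h1, h2, ZMod.intCast_eq_intCast_iff] at hp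
        exact (Int.modEq_iff_dvd.mp hp.symm)
      obtain ⟨k, hk⟩ := hUV
      refine ⟨(k, V + k), ?_⟩
      have hU : (V + k) + k = U := by omega
      have hV : (V + k) - k = V := by ring
      simp only [hf, AddMonoidHom.mk'_apply]
      rw [hU, hV]
      have e1 : ((U : ℤ) : ZMod (2^e3)) = p.1 := by
        simp [U, ZMod.natCast_rightInverse p.1]
      have e2 : ((V : ℤ) : ZMod (2^e4)) = p.2 := by
        simp [V, ZMod.natCast_rightInverse p.2]
      exact Prod.ext e1 e2
  -- ψ surjective
  have hsurj : Function.Surjective ψ := by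
    intro x
    refine ⟨((x.val : ZMod (2^e3)), 0), ?_⟩
    simp only [hψ, AddMonoidHom.mk'_apply, map_natCast, map_zero, sub_zero]
    exact ZMod.natCast_rightInverse x
  -- counting
  have hcard_ker : Nat.card ψ.ker * ψ.ker.index = 2^e3 * 2^e4 := by
    rw [AddSubgroup.card_mul_index]
    simp [Nat.card_prod, Nat.card_zmod]
  have hindex2 : ψ.ker.index = 2 := by
    rw [AddSubgroup.index_ker]
    rw [AddMonoidHom.range_eq_top.mpr hsurj]
    rw [Nat.card_congr AddSubgroup.topEquiv.toEquiv, Nat.card_zmod]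
  rw [hker, AddSubgroup.index_ker, hrange]
  rw [hindex2] at hcard_ker
  have : (2:ℕ)^e3 * 2^e4 = 2^(e3+e4-1) * 2 := by
    rw [← pow_add]
    rw [← pow_succ]
    congr 1
    omega
  omega
end

section
/- The surface S ⊂ ℙ⁴ defined by x0·x1 = x2² and x3·x4 = x2·(x1 − x0) has exactly two singular points, namely (0:0:0:1:0) and (0:0:0:0:1). -/
/-- The quartic del Pezzo surface `S : x₀x₁ = x₂², x₃x₄ = x₂(x₁ - x₀)` in `ℙ⁴` is
singular exactly at the two points `(0:0:0:1:0)` and `(0:0:0:0:1)`: a point of `S`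
(given by a nonzero representative `x`) is singular, i.e. the two gradient rows
`∇Q₁ = (x₁, x₀, -2x₂, 0, 0)` and `∇Q₂ = (x₂, -x₂, x₀-x₁, x₄, x₃)` have all `2×2`
minors zero, if and only if `x₀ = x₁ = x₂ = 0` and `x₃ = 0` or `x₄ = 0`. -/
theorem stmt_17 (x : Fin 5 → ℚ) (hx : x ≠ 0)
    (h1 : x 0 * x 1 = (x 2) ^ 2) (h2 : x 3 * x 4 = x 2 * (x 1 - x 0)) :
    (∀ i j : Fin 5,
        (![x 1, x 0, -2 * x 2, 0, 0] i) * (![x 2, -x 2, x 0 - x 1, x 4, x 3] j) -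
        (![x 1, x 0, -2 * x 2, 0, 0] j) * (![x 2, -x 2, x 0 - x 1, x 4, x 3] i) = 0) ↔
      (x 0 = 0 ∧ x 1 = 0 ∧ x 2 = 0 ∧ (x 3 = 0 ∨ x 4 = 0)) := by
  constructor
  · intro h
    have m02 := h 0 2
    have m12 := h 1 2
    simp only [Matrix.cons_val_zero, Matrix.cons_val_one, Matrix.head_cons,
      Matrix.cons_val_two, Matrix.tail_cons] at m02 m12
    -- m02 : x1*(x0-x1) - (-2*x2)*x2 = 0, m12 : x0*(x0-x1) - (-2*x2)*(-x2) = 0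
    have hc2 : (x 2) ^ 2 * (x 2) ^ 2 = 0 := by nlinarith [m02, m12, h1]
    have hc : x 2 = 0 := by
      have := mul_self_eq_zero.mp hc2
      exact pow_eq_zero_iff (by norm_num) |>.mp this
    have hb : x 1 = 0 := by nlinarith [m02, hc]
    have ha : x 0 = 0 := by nlinarith [m12, hc]
    refine ⟨ha, hb, hc, ?_⟩
    have : x 3 * x 4 = 0 := by rw [h2, hc]; ring
    exact mul_eq_zero.mp this
  · rintro ⟨ha, hb, hc, _⟩
    intro i j
    fin_cases i <;> fin_cases j <;> simp [ha, hb, hc]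
end
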